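/- Let L = L₀ ⊕ L₁ be a nilpotent complex Leibniz superalgebra with dim L₀ = n and dim L₁ = m which is generated by two elements both lying in the odd part L₁, and suppose the nilindex of L equals n + m. Then n = m − 1 or n = m − 2. -/

import Mathlib

/-- A complex Leibniz superalgebra: a complex vector space `V` with an internal
direct-sum decomposition `V = L0 ⊕ L1`, a bilinear bracket respecting the
`ℤ/2`-grading and satisfying the Leibniz superidentity (for homogeneous
second and third arguments). -/
structure LeibnizSuper (V : Type) [AddCommGroup V] [Module ℂ V] where
  bracket : V →ₗ[ℂ] V →ₗ[ℂ] V
  L0 : Submodule ℂ V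
  L1 : Submodule ℂ V
  compl : IsCompl L0 L1
  g00 : ∀ a ∈ L0, ∀ b ∈ L0, bracket a b ∈ L0
  g01 : ∀ a ∈ L0, ∀ b ∈ L1, bracket a b ∈ L1
  g10 : ∀ a ∈ L1, ∀ b ∈ L0, bracket a b ∈ L1
  g11 : ∀ a ∈ L1, ∀ b ∈ L1, bracket a b ∈ L0
  super_jacobi : ∀ (x : V) (α β : Bool) (y z : V),
    y ∈ (if α then L1 else L0) → z ∈ (if β then L1 else L0) →
    bracket x (bracket y z) =
      bracket (bracket x y) z - (if α && β then (-1 : ℂ) else 1) • bracket (bracket x z) y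

variable {V : Type} [AddCommGroup V] [Module ℂ V]

/-- Descending central series of a Leibniz superalgebra:
`dcs S k` is `L^{k+1}`, i.e. `dcs S 0 = L¹ = L`. -/
def LeibnizSuper.dcs (S : LeibnizSuper V) : ℕ → Submodule ℂ V
  | 0 => ⊤
  | k + 1 => Submodule.span ℂ {v | ∃ a ∈ S.dcs k, ∃ b : V, v = S.bracket a b}

/-- Descending central series of the even part `L₀` (a Leibniz algebra):
`dcs0 S k` is `L₀^{k+1}`, i.e. `dcs0 S 0 = L₀`. -/
def LeibnizSuper.dcs0 (S : LeibnizSuper V) : ℕ → Submodule ℂ V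
  | 0 => S.L0
  | k + 1 => Submodule.span ℂ {v | ∃ a ∈ S.dcs0 k, ∃ b ∈ S.L0, v = S.bracket a b}

/-- `G` generates the superalgebra: the smallest linear subspace containing `G`
and closed under the bracket is all of `V`. -/
def LeibnizSuper.generates (S : LeibnizSuper V) (G : Set V) : Prop :=
  ∀ p : Submodule ℂ V, G ⊆ p → (∀ a ∈ p, ∀ b ∈ p, S.bracket a b ∈ p) → p = ⊤

/-- The nilindex: the minimal `s ≥ 1` with `L^s = 0`. -/
noncomputable def LeibnizSuper.nilindex (S : LeibnizSuper V) : ℕ :=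
  sInf {s | 1 ≤ s ∧ S.dcs (s - 1) = ⊥}

/-- The characteristic-sequence condition `n₁ ≤ n - 2`, `m₁ ≤ m - 1`:
for every `x ∈ L₀ \ L₀²` the right multiplication operator `R_x`
satisfies `R_x^{n-2} = 0` on `L₀` and `R_x^{m-1} = 0` on `L₁`. -/
def LeibnizSuper.charSeqLE (S : LeibnizSuper V) (n m : ℕ) : Prop :=
  ∀ x ∈ S.L0, x ∉ S.dcs0 1 →
    (∀ v ∈ S.L0, ((S.bracket.flip x : Module.End ℂ V) ^ (n - 2)) v = 0) ∧
    (∀ v ∈ S.L1, ((S.bracket.flip x : Module.End ℂ V) ^ (m - 1)) v = 0)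

/-!
Generation by odd elements gives `L = L₁ + L²`. Since `[L^k, L²] ⊆ L^{k+2}` by the super Leibniz
identity, an induction shows that each quotient `L^k / L^{k+1}` is concentrated in the parity of
`k`; in particular `L₀ ⊆ L²`.

The `n + m - 1` nonzero quotients `L^k / L^{k+1}`, `1 ≤ k < n + m`, have dimensions summing to
`dim L = n + m`, so exactly one of them is two-dimensional. It is `L / L²`: otherwise
`L = ℂ x + L²`, and then each `L^k / L^{k+1}` is spanned by the image of `R_x^{k-1} x`. Hence the
quotients with `2 ≤ k < n + m` are one-dimensional, and since `L₀ ⊆ L²` the even ones account for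
all of `L₀`: `n = ⌊(n + m - 1) / 2⌋`.
-/

open Module Submodule

theorem inf_le_of_le_sup_of_disjoint {α : Type*} [Lattice α] [OrderBot α] [IsModularLattice α]
    {a b x y : α} (hab : Disjoint a b) (hy : y ≤ y ⊓ a ⊔ y ⊓ b) (h : x ≤ y ⊔ b) : x ⊓ a ≤ y := by
  have hx : x ≤ y ⊓ a ⊔ b :=
    h.trans (sup_le (hy.trans (sup_le_sup_left inf_le_right _)) le_sup_right)
  calc x ⊓ a ≤ (y ⊓ a ⊔ b) ⊓ a := inf_le_inf_right a hx
    _ = y ⊓ a := by rw [sup_inf_assoc_of_le _ inf_le_right, hab.symm.eq_bot, sup_bot_eq]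
    _ ≤ y := inf_le_left

theorem Nat.add_sub_le_of_forall_succ_lt {f : ℕ → ℕ} {i j : ℕ} (hij : i ≤ j)
    (hf : ∀ k, i ≤ k → k < j → f (k + 1) < f k) : f j + (j - i) ≤ f i := by
  induction j, hij using Nat.le_induction with
  | base => simp
  | succ j hij ih =>
    have hlt := hf j hij (lt_add_one j)
    have hle := ih fun k hik hkj => hf k hik (hkj.trans (lt_add_one j))
    omega

theorem Nat.le_add_of_forall_le_succ_add_one {f : ℕ → ℕ} (hf : ∀ k, f k ≤ f (k + 1) + 1)
    (j : ℕ) : f 0 ≤ f j + j := by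
  induction j with
  | zero => simp
  | succ j ih => have := hf j; omega

theorem Submodule.exists_span_singleton_sup_eq_top {K W : Type*} [DivisionRing K]
    [AddCommGroup W] [Module K W] [FiniteDimensional K W] {p : Submodule K W}
    (h : finrank K W ≤ finrank K p + 1) : ∃ x, K ∙ x ⊔ p = ⊤ := by
  by_cases hp : p = ⊤
  · exact ⟨0, by simp [hp]⟩
  obtain ⟨x, -, hx⟩ := SetLike.exists_of_lt (lt_top_iff_ne_top.2 hp)
  have hlt : p < K ∙ x ⊔ p :=
    lt_of_le_of_ne le_sup_right fun heq => hx (heq ▸ mem_sup_left (mem_span_singleton_self x))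
  have := finrank_lt_finrank_of_lt hlt
  exact ⟨x, eq_top_of_finrank_eq (le_antisymm (finrank_le _) (by omega))⟩

namespace LeibnizSuper

variable (S : LeibnizSuper V)

def part (α : Bool) : Submodule ℂ V := if α then S.L1 else S.L0

@[simp] lemma part_false : S.part false = S.L0 := rfl

@[simp] lemma part_true : S.part true = S.L1 := rfl

lemma isCompl_part (α : Bool) : IsCompl (S.part α) (S.part !α) := by
  cases α
  exacts [S.compl, S.compl.symm]

lemma bracket_mem_part {α β : Bool} {a b : V} (ha : a ∈ S.part α) (hb : b ∈ S.part β) :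
    S.bracket a b ∈ S.part (xor α β) := by
  cases α <;> cases β
  exacts [S.g00 a ha b hb, S.g01 a ha b hb, S.g10 a ha b hb, S.g11 a ha b hb]

lemma dcs_zero : S.dcs 0 = ⊤ := rfl

lemma dcs_succ (k : ℕ) : S.dcs (k + 1) = map₂ S.bracket (S.dcs k) ⊤ := by
  rw [map₂_eq_span_image2]
  show span ℂ _ = _
  congr 1
  ext v
  simp [eq_comm]

lemma bracket_mem_dcs_succ {k : ℕ} {a : V} (ha : a ∈ S.dcs k) (b : V) :
    S.bracket a b ∈ S.dcs (k + 1) := by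
  rw [dcs_succ]
  exact apply_mem_map₂ _ ha mem_top

lemma dcs_antitone : Antitone S.dcs := by
  refine antitone_nat_of_succ_le fun k => ?_
  induction k with
  | zero => exact le_top
  | succ k ih =>
    exact (S.dcs_succ (k + 1)).trans_le ((map₂_le_map₂_left ih).trans (S.dcs_succ k).ge)

lemma dcs_succ_lt (hnilp : ∃ s, S.dcs s = ⊥) {j : ℕ} (hj : S.dcs j ≠ ⊥) :
    S.dcs (j + 1) < S.dcs j := by
  refine lt_of_le_of_ne (S.dcs_antitone j.le_succ) fun heq => hj ?_
  have hstable : ∀ k, j ≤ k → S.dcs k = S.dcs j := fun k hk => by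
    induction k, hk using Nat.le_induction with
    | base => rfl
    | succ k _ ih => rw [dcs_succ, ih, ← dcs_succ, heq]
  obtain ⟨s, hs⟩ := hnilp
  rw [← hstable (max s j) (le_max_right s j), eq_bot_iff, ← hs]
  exact S.dcs_antitone (le_max_left s j)

lemma nilindex_spec (hnilp : ∃ s, S.dcs s = ⊥) :
    1 ≤ S.nilindex ∧ S.dcs (S.nilindex - 1) = ⊥ :=
  Nat.sInf_mem (s := {s | 1 ≤ s ∧ S.dcs (s - 1) = ⊥}) <|
    let ⟨s, hs⟩ := hnilp; ⟨s + 1, s.succ_pos, hs⟩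

lemma dcs_ne_bot_of_lt_nilindex {j : ℕ} (hj : j + 1 < S.nilindex) : S.dcs j ≠ ⊥ :=
  fun h => Nat.notMem_of_lt_sInf hj ⟨j.succ_pos, h⟩

lemma map₂_dcs_inf_part_le (k : ℕ) (α β : Bool) :
    map₂ S.bracket (S.dcs k ⊓ S.part α) (S.part β) ≤ S.dcs (k + 1) ⊓ S.part (xor α β) :=
  map₂_le.2 fun _ ha _ hb => ⟨S.bracket_mem_dcs_succ ha.1 _, S.bracket_mem_part ha.2 hb⟩

lemma dcs_le_inf_L0_sup_inf_L1 (j : ℕ) : S.dcs j ≤ S.dcs j ⊓ S.L0 ⊔ S.dcs j ⊓ S.L1 := by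
  induction j with
  | zero => simp [dcs_zero, S.compl.sup_eq_top]
  | succ k ih =>
    refine (S.dcs_succ k).le.trans ?_
    rw [← S.compl.sup_eq_top]
    refine (map₂_le_map₂_left ih).trans ?_
    rw [map₂_sup_left, map₂_sup_right, map₂_sup_right]
    exact sup_le
      (sup_le (le_sup_of_le_left (S.map₂_dcs_inf_part_le k false false))
        (le_sup_of_le_right (S.map₂_dcs_inf_part_le k false true)))
      (sup_le (le_sup_of_le_right (S.map₂_dcs_inf_part_le k true false))
        (le_sup_of_le_left (S.map₂_dcs_inf_part_le k true true)))

lemma dcs_le_inf_part_sup (j : ℕ) (α : Bool) :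
    S.dcs j ≤ S.dcs j ⊓ S.part α ⊔ S.dcs j ⊓ S.part !α := by
  cases α
  · exact S.dcs_le_inf_L0_sup_inf_L1 j
  · exact sup_comm (S.dcs j ⊓ S.L0) _ ▸ S.dcs_le_inf_L0_sup_inf_L1 j

lemma finrank_dcs [FiniteDimensional ℂ V] (j : ℕ) :
    finrank ℂ (S.dcs j) = finrank ℂ ↥(S.dcs j ⊓ S.L0) + finrank ℂ ↥(S.dcs j ⊓ S.L1) := by
  have hsup : S.dcs j ⊓ S.L0 ⊔ S.dcs j ⊓ S.L1 = S.dcs j :=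
    le_antisymm (sup_le inf_le_left inf_le_left) (S.dcs_le_inf_L0_sup_inf_L1 j)
  have hinf : S.dcs j ⊓ S.L0 ⊓ (S.dcs j ⊓ S.L1) = ⊥ :=
    (S.compl.disjoint.mono inf_le_right inf_le_right).eq_bot
  have := finrank_sup_add_finrank_inf_eq (S.dcs j ⊓ S.L0) (S.dcs j ⊓ S.L1)
  rwa [hsup, hinf, finrank_bot, add_zero] at this

lemma map₂_dcs_dcs_one_le (j : ℕ) : map₂ S.bracket (S.dcs j) (S.dcs 1) ≤ S.dcs (j + 2) := by
  refine map₂_le.2 fun a ha c hc => ?_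
  have hjacobi (α β : Bool) :
      map₂ S.bracket (S.part α) (S.part β) ≤ (S.dcs (j + 2)).comap (S.bracket a) :=
    map₂_le.2 fun y hy z hz => by
      rw [mem_comap, S.super_jacobi a α β y z hy hz]
      exact sub_mem (S.bracket_mem_dcs_succ (S.bracket_mem_dcs_succ ha y) z)
        (smul_mem _ _ (S.bracket_mem_dcs_succ (S.bracket_mem_dcs_succ ha z) y))
  rw [dcs_succ, dcs_zero, ← S.compl.sup_eq_top, map₂_sup_left, map₂_sup_right,
    map₂_sup_right] at hc
  exact sup_le (sup_le (hjacobi false false) (hjacobi false true))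
    (sup_le (hjacobi true false) (hjacobi true true)) hc

lemma sup_dcs_one_eq_top_of_generates {G : Set V} (hG : S.generates G) {p : Submodule ℂ V}
    (hGp : G ⊆ p) : p ⊔ S.dcs 1 = ⊤ :=
  hG _ (hGp.trans (SetLike.coe_subset_coe.2 le_sup_left)) fun _ _ b _ =>
    mem_sup_right (S.bracket_mem_dcs_succ (k := 0) mem_top b)

section OddGenerated

variable {S} (hT : S.L1 ⊔ S.dcs 1 = ⊤)
include hT

lemma dcs_le_dcs_succ_sup_part (j : ℕ) : S.dcs j ≤ S.dcs (j + 1) ⊔ S.part !j.bodd := by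
  induction j with
  | zero => simp [dcs_zero, ← hT, sup_comm]
  | succ k ih =>
    have hk : S.dcs k ≤ S.dcs (k + 1) ⊔ S.dcs k ⊓ S.part !k.bodd :=
      (S.dcs_le_inf_part_sup k k.bodd).trans <| sup_le_sup_right
        (inf_le_of_le_sup_of_disjoint (S.isCompl_part _).disjoint (S.dcs_le_inf_part_sup _ _) ih) _
    refine (S.dcs_succ k).le.trans ?_
    rw [← hT]
    refine (map₂_le_map₂_left hk).trans ?_
    rw [map₂_sup_left]
    refine sup_le (le_sup_of_le_left (map₂_le.2 fun _ ha b _ => S.bracket_mem_dcs_succ ha b)) ?_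
    rw [map₂_sup_right]
    refine sup_le (le_sup_of_le_right ?_)
      (le_sup_of_le_left ((map₂_le_map₂_left inf_le_left).trans (S.map₂_dcs_dcs_one_le k)))
    refine map₂_le.2 fun a ha b hb => ?_
    simpa [Nat.bodd_succ] using S.bracket_mem_part (β := true) ha.2 hb

lemma dcs_inf_part_bodd_eq (j : ℕ) :
    S.dcs j ⊓ S.part j.bodd = S.dcs (j + 1) ⊓ S.part j.bodd :=
  le_antisymm
    (le_inf (inf_le_of_le_sup_of_disjoint (S.isCompl_part _).disjoint
      (S.dcs_le_inf_part_sup _ _) (S.dcs_le_dcs_succ_sup_part hT j)) inf_le_right)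
    (inf_le_inf_right _ (S.dcs_antitone j.le_succ))

lemma L0_le_dcs_one : S.L0 ≤ S.dcs 1 := by
  have h := (S.dcs_inf_part_bodd_eq hT 0).le
  simp only [dcs_zero, Nat.bodd_zero, part_false, top_inf_eq] at h
  exact h.trans inf_le_left

lemma finrank_dcs_inf_L0_add_div_two [FiniteDimensional ℂ V] {N : ℕ}
    (hdim : ∀ j, 1 ≤ j → j ≤ N → finrank ℂ (S.dcs j) = N - j) {j : ℕ} (hj : 1 ≤ j)
    (hjN : j ≤ N) : finrank ℂ ↥(S.dcs j ⊓ S.L0) + j / 2 = N / 2 := by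
  induction hjN using Nat.decreasingInduction with
  | self =>
    have := S.finrank_dcs N
    rw [hdim N hj le_rfl, Nat.sub_self] at this
    omega
  | of_succ k hk ih =>
    have hsucc := ih (by omega)
    have hk0 := S.finrank_dcs k
    have hk1 := S.finrank_dcs (k + 1)
    rw [hdim k hj hk.le] at hk0
    rw [hdim (k + 1) (by omega) hk] at hk1
    have hpar := S.dcs_inf_part_bodd_eq hT k
    have hmod := Nat.mod_two_of_bodd k
    cases hbodd : k.bodd <;> rw [hbodd] at hpar hmod
    · simp only [part_false, Bool.toNat_false] at hpar hmod
      rw [hpar]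
      omega
    · simp only [part_true, Bool.toNat_true] at hpar hmod
      rw [hpar] at hk0
      omega

end OddGenerated

lemma pow_flip_apply_mem_dcs (x : V) (k : ℕ) : ((S.bracket.flip x) ^ k) x ∈ S.dcs k := by
  induction k with
  | zero => exact mem_top
  | succ k ih =>
    rw [pow_succ', Module.End.mul_apply, LinearMap.flip_apply]
    exact S.bracket_mem_dcs_succ ih x

lemma dcs_le_dcs_succ_sup_span {x : V} (hx : ℂ ∙ x ⊔ S.dcs 1 = ⊤) (j : ℕ) :
    S.dcs j ≤ S.dcs (j + 1) ⊔ ℂ ∙ ((S.bracket.flip x) ^ j) x := by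
  induction j with
  | zero => simp [dcs_zero, ← hx, sup_comm]
  | succ k ih =>
    refine (S.dcs_succ k).le.trans ?_
    rw [← hx]
    refine (map₂_le_map₂_left ih).trans ?_
    rw [map₂_sup_left]
    refine sup_le (le_sup_of_le_left (map₂_le.2 fun _ ha b _ => S.bracket_mem_dcs_succ ha b)) ?_
    rw [map₂_sup_right, map₂_span_span, Set.image2_singleton, pow_succ', Module.End.mul_apply]
    refine sup_le (le_sup_of_le_right le_rfl) (le_sup_of_le_left ?_)
    refine (map₂_le_map₂_left ?_).trans (S.map₂_dcs_dcs_one_le k)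
    exact (span_singleton_le_iff_mem _ _).2 (S.pow_flip_apply_mem_dcs x k)

lemma finrank_le_of_span_singleton_sup_dcs_one_eq_top [FiniteDimensional ℂ V] {x : V}
    (hx : ℂ ∙ x ⊔ S.dcs 1 = ⊤) {N : ℕ} (hN : S.dcs N = ⊥) : finrank ℂ V ≤ N := by
  have hstep (k : ℕ) : finrank ℂ (S.dcs k) ≤ finrank ℂ (S.dcs (k + 1)) + 1 :=
    (finrank_mono (S.dcs_le_dcs_succ_sup_span hx k)).trans <|
      (finrank_add_le_finrank_add_finrank _ _).trans <| Nat.add_le_add_left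
        (by simpa using finrank_span_le_card (R := ℂ) {((S.bracket.flip x) ^ k) x}) _
  have := Nat.le_add_of_forall_le_succ_add_one hstep N
  rwa [hN, finrank_bot, zero_add, dcs_zero, finrank_top] at this

end LeibnizSuper

/-- from the proof of Theorem 3.6 of the paper: if a nilpotent
complex Leibniz superalgebra with `dim L₀ = n`, `dim L₁ = m` is generated by two
elements of the odd part and has nilindex `n + m`, then `n = m - 1` or
`n = m - 2`. -/
theorem leibnizSuper_odd_generators_dims
    {V : Type} [AddCommGroup V] [Module ℂ V] [FiniteDimensional ℂ V]
    (S : LeibnizSuper V) (n m : ℕ)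
    (hdim0 : Module.finrank ℂ S.L0 = n) (hdim1 : Module.finrank ℂ S.L1 = m)
    (hnilp : ∃ s, S.dcs s = ⊥)
    (hgen : ∃ a ∈ S.L1, ∃ b ∈ S.L1, S.generates {a, b})
    (hnil : S.nilindex = n + m) :
    n + 1 = m ∨ n + 2 = m := by
  obtain ⟨a, ha, b, hb, hgen⟩ := hgen
  have hT : S.L1 ⊔ S.dcs 1 = ⊤ :=
    S.sup_dcs_one_eq_top_of_generates hgen (Set.insert_subset ha (Set.singleton_subset_iff.2 hb))
  have hV : finrank ℂ V = n + m := by rw [← hdim0, ← hdim1, finrank_add_eq_of_isCompl S.compl]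
  obtain ⟨hpos, hbot⟩ := S.nilindex_spec hnilp
  rw [hnil] at hpos hbot
  have hstrict (k : ℕ) (hk : k < n + m - 1) : finrank ℂ (S.dcs (k + 1)) < finrank ℂ (S.dcs k) :=
    finrank_lt_finrank_of_lt (S.dcs_succ_lt hnilp (S.dcs_ne_bot_of_lt_nilindex (by omega)))
  have hdrop : finrank ℂ (S.dcs 1) + 2 ≤ n + m := by
    by_contra! h
    obtain ⟨x, hx⟩ := exists_span_singleton_sup_eq_top (p := S.dcs 1) (by omega)
    have := S.finrank_le_of_span_singleton_sup_dcs_one_eq_top hx hbot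
    omega
  have hdim (j : ℕ) (hj : 1 ≤ j) (hjN : j ≤ n + m - 1) :
      finrank ℂ (S.dcs j) = n + m - 1 - j := by
    have hupper := Nat.add_sub_le_of_forall_succ_lt (f := fun k => finrank ℂ (S.dcs k)) hj
      fun k _ hk => hstrict k (by omega)
    have hlower := Nat.add_sub_le_of_forall_succ_lt (f := fun k => finrank ℂ (S.dcs k)) hjN
      fun k _ hk => hstrict k hk
    rw [hbot, finrank_bot] at hlower
    omega
  have hcount := S.finrank_dcs_inf_L0_add_div_two hT hdim le_rfl (by omega)
  rw [inf_eq_right.2 (S.L0_le_dcs_one hT), hdim0] at hcount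
  omega
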